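/- Let n ≥ 2 be a natural number and M a real n×n matrix all of whose entries are 0 or 1. Let t := s(M) be the number of 1's in M and suppose t > n. Then with k := t/n one has |det M| ≤ k^((n+1)/2)·((n − k)/(n − 1))^((n−1)/2). -/

import Mathlib

/-!
The eigenvalues `λᵢ` of the Gram matrix `Mᵀ M` are nonnegative with `∏ λᵢ = (det M)²` and, since
the entries are `0` or `1`, `∑ λᵢ = tr (Mᵀ M) = t`. Testing `Mᵀ M` on the all-ones vector and
applying Cauchy–Schwarz to the row sums gives a largest eigenvalue `μ ≥ t² / n² = k²`. AM–GM on
the other `n - 1` eigenvalues gives `(det M)² ≤ μ ((t - μ) / (n - 1)) ^ (n - 1)`, and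
`x ↦ x (t - x) ^ (n - 1)` decreases for `x ≥ t / n`, so `μ` may be replaced by `k² ≥ k = t / n`.
-/

open Finset Matrix
open scoped MatrixOrder

theorem Real.prod_le_sum_div_card_pow {ι : Type*} (s : Finset ι) (f : ι → ℝ)
    (hf : ∀ i ∈ s, 0 ≤ f i) : ∏ i ∈ s, f i ≤ ((∑ i ∈ s, f i) / #s) ^ #s := by
  rcases s.eq_empty_or_nonempty with rfl | hs
  · simp
  have hcard : (0 : ℝ) < #s := mod_cast hs.card_pos
  have hamgm := Real.geom_mean_le_arith_mean s (fun _ ↦ 1) f (fun _ _ ↦ zero_le_one)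
    (by simpa using hcard) hf
  simp only [Real.rpow_one, one_mul, sum_const, nsmul_eq_mul, mul_one] at hamgm
  calc ∏ i ∈ s, f i = ((∏ i ∈ s, f i) ^ (#s : ℝ)⁻¹) ^ #s := by
        rw [← Real.rpow_natCast, ← Real.rpow_mul (prod_nonneg hf), inv_mul_cancel₀ hcard.ne',
          Real.rpow_one]
    _ ≤ ((∑ i ∈ s, f i) / #s) ^ #s := by gcongr; exact Real.rpow_nonneg (prod_nonneg hf) _

/-- Bernoulli's inequality `1 + m u ≤ (1 + u) ^ m` with `1 + u = (t - a) / (t - b)`. -/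
theorem antitoneOn_mul_pow_sub (t : ℝ) (m : ℕ) :
    AntitoneOn (fun x ↦ x * (t - x) ^ m) (Set.Icc (t / (m + 1)) t) := by
  rintro a ⟨ha, hat⟩ b ⟨-, hbt⟩ hab
  dsimp only
  rcases m.eq_zero_or_pos with rfl | hm0
  · simp only [CharP.cast_eq_zero, zero_add, div_one] at ha
    simp only [pow_zero, mul_one]
    linarith
  have hm : t - a ≤ m * a := by rw [div_le_iff₀ (by positivity)] at ha; linarith
  have ha0 : 0 ≤ a := by
    have : (0 : ℝ) < m := mod_cast hm0
    nlinarith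
  rcases hbt.eq_or_lt with rfl | hbt
  · rw [sub_self, zero_pow hm0.ne', mul_zero]
    exact mul_nonneg ha0 (pow_nonneg (sub_nonneg.2 hat) m)
  set u := (b - a) / (t - b)
  have htb : 0 < t - b := sub_pos.2 hbt
  have hu : 0 ≤ u := div_nonneg (by linarith) htb.le
  have hshift : (1 + u) * (t - b) = t - a := by simp only [u]; field_simp; ring
  have hb : b ≤ a * (1 + m * u) := by
    rw [← sub_nonneg]
    have : a * (1 + m * u) - b = (b - a) * (m * a - (t - b)) / (t - b) := by
      simp only [u]; field_simp; ring
    rw [this]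
    exact div_nonneg (mul_nonneg (by linarith) (by linarith)) htb.le
  calc b * (t - b) ^ m ≤ a * (1 + m * u) * (t - b) ^ m := by gcongr
    _ ≤ a * (1 + u) ^ m * (t - b) ^ m := by gcongr; exact one_add_mul_le_pow (by linarith) m
    _ = a * (t - a) ^ m := by rw [mul_assoc, ← mul_pow, hshift]

theorem prod_le_mul_pow_of_le_apply {ι : Type*} [Fintype ι] [DecidableEq ι] {m : ℕ}
    (hcard : Fintype.card ι = m + 1) (e : ι → ℝ) (he : ∀ i, 0 ≤ e i) {c : ℝ} {i₀ : ι}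
    (hc : (∑ i, e i) / (m + 1) ≤ c) (hci₀ : c ≤ e i₀) :
    ∏ i, e i ≤ c * ((∑ i, e i - c) / m) ^ m := by
  set T := ∑ i, e i
  have hrest : ∑ i ∈ univ.erase i₀, e i = T - e i₀ := sum_erase_eq_sub (mem_univ i₀)
  have hcard' : #(univ.erase i₀) = m := by simp [card_erase_of_mem, hcard]
  have hamgm := Real.prod_le_sum_div_card_pow (univ.erase i₀) e fun i _ ↦ he i
  rw [hrest, hcard'] at hamgm
  have hmono : e i₀ * (T - e i₀) ^ m ≤ c * (T - c) ^ m :=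
    antitoneOn_mul_pow_sub T m ⟨hc, hci₀.trans (single_le_sum (fun i _ ↦ he i) (mem_univ i₀))⟩
      ⟨hc.trans hci₀, single_le_sum (fun i _ ↦ he i) (mem_univ i₀)⟩ hci₀
  calc ∏ i, e i = e i₀ * ∏ i ∈ univ.erase i₀, e i := (mul_prod_erase _ _ (mem_univ i₀)).symm
    _ ≤ e i₀ * ((T - e i₀) / m) ^ m := by gcongr; exact he i₀
    _ = e i₀ * (T - e i₀) ^ m / (m : ℝ) ^ m := by rw [div_pow, mul_div_assoc]
    _ ≤ c * (T - c) ^ m / (m : ℝ) ^ m := by gcongr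
    _ = c * ((T - c) / m) ^ m := by rw [div_pow, mul_div_assoc]

theorem Matrix.IsHermitian.dotProduct_mulVec_le_of_eigenvalues_le {n : Type*} [Fintype n]
    [DecidableEq n] {A : Matrix n n ℝ} (hA : A.IsHermitian) {c : ℝ}
    (hc : ∀ i, hA.eigenvalues i ≤ c) (x : n → ℝ) : x ⬝ᵥ A *ᵥ x ≤ c * (x ⬝ᵥ x) := by
  have hle : A ≤ algebraMap ℝ _ c := by
    refine le_algebraMap_of_spectrum_le ?_ hA.isSelfAdjoint
    rw [hA.spectrum_real_eq_range_eigenvalues]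
    rintro _ ⟨i, rfl⟩
    exact hc i
  simpa [sub_mulVec, Algebra.algebraMap_eq_smul_one, smul_mulVec] using
    (Matrix.le_iff.mp hle).dotProduct_mulVec_nonneg x

/-- Test the Rayleigh quotient of `Mᴴ * M` on the all-ones vector. -/
theorem Matrix.exists_sq_sum_div_card_mul_card_le_eigenvalues {m n : Type*} [Fintype m]
    [Fintype n] [DecidableEq n] [Nonempty m] [Nonempty n] (M : Matrix m n ℝ) :
    ∃ i, (∑ i, ∑ j, M i j) ^ 2 / (Fintype.card m * Fintype.card n) ≤
      (posSemidef_conjTranspose_mul_self M).1.eigenvalues i := by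
  set hG := (posSemidef_conjTranspose_mul_self M).1
  obtain ⟨i₀, hi₀⟩ := Finite.exists_max hG.eigenvalues
  refine ⟨i₀, ?_⟩
  have hrayleigh := hG.dotProduct_mulVec_le_of_eigenvalues_le hi₀ 1
  have hform : (1 : n → ℝ) ⬝ᵥ (Mᴴ * M) *ᵥ 1 = ∑ i, (∑ j, M i j) ^ 2 := by
    rw [← mulVec_mulVec, dotProduct_mulVec, vecMul_conjTranspose]
    simp [dotProduct, mulVec, sq]
  have hcs := sq_sum_le_card_mul_sum_sq (s := univ) (f := fun i ↦ ∑ j, M i j)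
  simp only [dotProduct_one, Pi.one_apply, sum_const, card_univ, nsmul_eq_mul, mul_one,
    hform] at hrayleigh hcs
  have hm : (0 : ℝ) < Fintype.card m := mod_cast Fintype.card_pos
  have hn : (0 : ℝ) < Fintype.card n := mod_cast Fintype.card_pos
  rw [div_le_iff₀ (by positivity)]
  nlinarith

theorem Matrix.trace_conjTranspose_mul_self_of_zero_or_one {m n : Type*} [Fintype m]
    [Fintype n] {M : Matrix m n ℝ} (hM : ∀ i j, M i j = 0 ∨ M i j = 1) :
    (Mᴴ * M).trace = ∑ i, ∑ j, M i j := by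
  simp only [trace, diag_apply, mul_apply, conjTranspose_apply, star_trivial]
  rw [sum_comm]
  refine sum_congr rfl fun i _ ↦ sum_congr rfl fun j _ ↦ ?_
  rcases hM i j with h | h <;> simp [h]

theorem Matrix.sum_le_card_mul_card_of_zero_or_one {m n : Type*} [Fintype m] [Fintype n]
    {M : Matrix m n ℝ} (hM : ∀ i j, M i j = 0 ∨ M i j = 1) :
    ∑ i, ∑ j, M i j ≤ Fintype.card m * Fintype.card n := by
  calc ∑ i, ∑ j, M i j ≤ ∑ _i : m, ∑ _j : n, (1 : ℝ) := by
        gcongr with i _ j _; rcases hM i j with h | h <;> simp [h]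
    _ = Fintype.card m * Fintype.card n := by simp

theorem sq_rpow_mul_rpow_eq {m : ℕ} {k : ℝ} (hk : 0 ≤ k) (hkm : k ≤ m + 1) :
    (k ^ (((m : ℝ) + 1 + 1) / 2) *
        ((m + 1 - k) / ((m : ℝ) + 1 - 1)) ^ (((m : ℝ) + 1 - 1) / 2)) ^ 2 =
      k ^ 2 * (((m + 1) * k - k ^ 2) / m) ^ m := by
  have hB : 0 ≤ (m + 1 - k) / (m : ℝ) := div_nonneg (by linarith) m.cast_nonneg
  rw [add_sub_cancel_right, Real.rpow_div_two_eq_sqrt _ hk, Real.rpow_div_two_eq_sqrt _ hB,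
    show (m : ℝ) + 1 + 1 = (m + 2 : ℕ) by push_cast; ring, Real.rpow_natCast, Real.rpow_natCast,
    mul_pow, ← pow_mul, ← pow_mul, mul_comm _ 2, mul_comm _ 2, pow_mul, pow_mul,
    Real.sq_sqrt hk, Real.sq_sqrt hB, show (m + 1) * k - k ^ 2 = k * (m + 1 - k) by ring,
    mul_div_assoc, mul_pow]
  ring

theorem ryser_determinant_bound_general (n : ℕ)
    (M : Matrix (Fin n) (Fin n) ℝ)
    (hentries : ∀ i j, M i j = 0 ∨ M i j = 1)
    (t : ℝ) (ht : t = ∑ i, ∑ j, M i j) (htn : t > n)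
    (k : ℝ) (hk : k = t / n) :
    |M.det| ≤ k ^ (((n : ℝ) + 1) / 2) * (((n : ℝ) - k) / ((n : ℝ) - 1)) ^ (((n : ℝ) - 1) / 2) := by
  obtain ⟨m, rfl⟩ : ∃ m, n = m + 1 :=
    Nat.exists_eq_add_one.2 (Nat.pos_of_ne_zero (by rintro rfl; simp [ht] at htn))
  push_cast at htn hk ⊢
  have htk : t = (m + 1) * k := by rw [hk]; field_simp
  have hk1 : 1 ≤ k := by rw [hk, le_div_iff₀ (by positivity)]; linarith
  have hkm : k ≤ m + 1 := by
    have := ht ▸ sum_le_card_mul_card_of_zero_or_one hentries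
    simp only [Fintype.card_fin, Nat.cast_succ] at this
    nlinarith
  have hG := posSemidef_conjTranspose_mul_self M
  have hsum : ∑ i, hG.1.eigenvalues i = t := by
    rw [ht, ← trace_conjTranspose_mul_self_of_zero_or_one hentries,
      hG.1.trace_eq_sum_eigenvalues]
    simp
  have hprod : ∏ i, hG.1.eigenvalues i = M.det ^ 2 := by
    have := hG.1.det_eq_prod_eigenvalues
    rw [det_mul, det_conjTranspose, star_trivial] at this
    simpa [sq] using this.symm
  obtain ⟨i₀, hi₀⟩ := exists_sq_sum_div_card_mul_card_le_eigenvalues M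
  rw [← ht, Fintype.card_fin, Nat.cast_succ, ← sq, ← div_pow, ← hk] at hi₀
  have hdet := prod_le_mul_pow_of_le_apply (m := m) (by simp) _ hG.eigenvalues_nonneg
    (by rw [hsum, ← hk]; nlinarith) hi₀
  rw [hprod, hsum, htk, ← sq_rpow_mul_rpow_eq (by linarith) hkm] at hdet
  exact abs_le_of_sq_le_sq hdet (mul_nonneg (Real.rpow_nonneg (by linarith) _)
    (Real.rpow_nonneg (div_nonneg (by linarith) (by simp)) _))

theorem ryser_determinant_bound (n : ℕ) (hn : 2 ≤ n)
    (M : Matrix (Fin n) (Fin n) ℝ)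
    (hentries : ∀ i j, M i j = 0 ∨ M i j = 1)
    (t : ℝ) (ht : t = ∑ i, ∑ j, M i j) (htn : t > n)
    (k : ℝ) (hk : k = t / n) :
    |M.det| ≤ k ^ (((n : ℝ) + 1) / 2) * (((n : ℝ) - k) / ((n : ℝ) - 1)) ^ (((n : ℝ) - 1) / 2) :=
  ryser_determinant_bound_general n M hentries t ht htn k hk
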